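/- arXiv:1604.02769 — 5 statements merged into one kernel-verified Lean document; each statement's English description precedes it below -/
import Mathlib

section
/- Cheap upper bound: Let A be an m×n real matrix and for a finite index set L define α_L = sup over nonzero z with Az = 0 of (∑_{i∈L}|z_i|)/(∑_i |z_i|). Then for any index set K with |K| = k and any 1 ≤ l ≤ k, α_K ≤ (1/C(k-1,l-1)) · ∑_{L ⊆ K, |L| = l} α_L, assuming the null space of A is nontrivial so the suprema are attained or finite. -/
/-!
Every `i ∈ K` lies in exactly `C(k-1, l-1)` of the `l`-subsets of `K`, so for a null vector `z`
the ratio `∑_{i∈K} |z i| / ∑_i |z i|` is `1 / C(k-1, l-1)` times the sum of the corresponding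
ratios over `L ⊆ K`, `|L| = l`; bound each of these by `α_L` and take the supremum over `z`.
-/

open Finset

noncomputable def alphaS {m n : ℕ} (A : Matrix (Fin m) (Fin n) ℝ) (S : Finset (Fin n)) : ℝ :=
  sSup {r : ℝ | ∃ z : Fin n → ℝ, A.mulVec z = 0 ∧ z ≠ 0 ∧
    r = (∑ i ∈ S, |z i|) / (∑ i, |z i|)}

namespace Finset

variable {α : Type*} [DecidableEq α]

lemma card_filter_mem_powersetCard {K : Finset α} {i : α} (hi : i ∈ K) {l : ℕ} (hl : 1 ≤ l) :
    #{L ∈ K.powersetCard l | i ∈ L} = (#K - 1).choose (l - 1) := by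
  simpa using card_filter_powersetCard_subset {i} K l (singleton_subset_iff.2 hi) (by simpa)

lemma sum_powersetCard_sum {M : Type*} [AddCommMonoid M] (K : Finset α) {l : ℕ} (hl : 1 ≤ l)
    (f : α → M) :
    ∑ L ∈ K.powersetCard l, ∑ i ∈ L, f i = (#K - 1).choose (l - 1) • ∑ i ∈ K, f i := by
  rw [sum_comm' (t' := K) (s' := fun i ↦ {L ∈ K.powersetCard l | i ∈ L}), smul_sum]
  · refine sum_congr rfl fun i hi ↦ ?_
    rw [sum_const, card_filter_mem_powersetCard hi hl]
  · intro L i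
    simp only [mem_filter, mem_powersetCard]
    constructor
    · rintro ⟨⟨hLK, hL⟩, hi⟩
      exact ⟨⟨⟨hLK, hL⟩, hi⟩, hLK hi⟩
    · rintro ⟨⟨hLK, hi⟩, -⟩
      exact ⟨hLK, hi⟩

end Finset

section alphaS

variable {m n : ℕ} (A : Matrix (Fin m) (Fin n) ℝ) (S : Finset (Fin n))

lemma alphaS_bddAbove :
    BddAbove {r : ℝ | ∃ z : Fin n → ℝ, A.mulVec z = 0 ∧ z ≠ 0 ∧
      r = (∑ i ∈ S, |z i|) / (∑ i, |z i|)} := by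
  refine ⟨1, ?_⟩
  rintro _ ⟨z, -, -, rfl⟩
  exact div_le_one_of_le₀ (sum_le_sum_of_subset_of_nonneg S.subset_univ fun i _ _ ↦ abs_nonneg _)
    (by positivity)

lemma div_sum_abs_le_alphaS {z : Fin n → ℝ} (hAz : A.mulVec z = 0) (hz : z ≠ 0) :
    (∑ i ∈ S, |z i|) / (∑ i, |z i|) ≤ alphaS A S :=
  le_csSup (alphaS_bddAbove A S) ⟨z, hAz, hz, rfl⟩

lemma alphaS_nonneg : 0 ≤ alphaS A S := by
  refine Real.sSup_nonneg ?_
  rintro _ ⟨z, -, -, rfl⟩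
  positivity

end alphaS

theorem stmt_1_general {m n k l : ℕ} (A : Matrix (Fin m) (Fin n) ℝ)
    (K : Finset (Fin n)) (hK : K.card = k) (hl : 1 ≤ l) (hlk : l ≤ k) :
    alphaS A K ≤ (1 / ((k - 1).choose (l - 1) : ℝ)) *
      ∑ L ∈ K.powersetCard l, alphaS A L := by
  have hC : 0 < ((k - 1).choose (l - 1) : ℝ) := mod_cast Nat.choose_pos (by omega)
  refine Real.sSup_le ?_ (mul_nonneg (by positivity) (sum_nonneg fun L _ ↦ alphaS_nonneg A L))
  rintro _ ⟨z, hAz, hz, rfl⟩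
  calc (∑ i ∈ K, |z i|) / ∑ i, |z i|
      = (1 / ((k - 1).choose (l - 1) : ℝ)) *
          ∑ L ∈ K.powersetCard l, (∑ i ∈ L, |z i|) / ∑ i, |z i| := by
        rw [← sum_div, sum_powersetCard_sum K hl, hK, nsmul_eq_mul]
        field_simp
    _ ≤ (1 / ((k - 1).choose (l - 1) : ℝ)) * ∑ L ∈ K.powersetCard l, alphaS A L := by
        gcongr with L
        exact div_sum_abs_le_alphaS A L hAz hz

theorem stmt_1 {m n k l : ℕ} (A : Matrix (Fin m) (Fin n) ℝ)
    (hN : ∃ z : Fin n → ℝ, A.mulVec z = 0 ∧ z ≠ 0)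
    (K : Finset (Fin n)) (hK : K.card = k) (hl : 1 ≤ l) (hlk : l ≤ k) :
    alphaS A K ≤ (1 / ((k - 1).choose (l - 1) : ℝ)) *
      ∑ L ∈ K.powersetCard l, alphaS A L :=
  stmt_1_general A K hK hl hlk
end

section
/- Scaling bound: α_k ≤ (k/l) · α_l for any integers 1 ≤ l ≤ k ≤ n, where α_j denotes the maximum over all subsets of size at most j of the proportion parameter. -/
open Finset

noncomputable def alphaK {m n : ℕ} (A : Matrix (Fin m) (Fin n) ℝ) (k : ℕ) : ℝ :=
  sSup {r : ℝ | ∃ K : Finset (Fin n), K.card ≤ k ∧ r = alphaS A K}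

/-! The `l` largest entries of `|z|` on a set `K` with `#K ≤ k` carry at least an `l / k` share
of `∑ i ∈ K, |z i|`, and the ratio for those `l` indices is bounded by `α_l`. -/

-- Removing a minimal element from `K` does not lower the average of `f` over the rest.
theorem exists_subset_card_eq_mul_sum_le {ι 𝕜 : Type*} [CommRing 𝕜] [LinearOrder 𝕜]
    [IsStrictOrderedRing 𝕜] (f : ι → 𝕜) {l : ℕ} {K : Finset ι} (hlK : l ≤ #K) :
    ∃ L ⊆ K, #L = l ∧ l * ∑ i ∈ K, f i ≤ #K * ∑ i ∈ L, f i := by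
  classical
  generalize hc : #K = c at hlK
  induction c, hlK using Nat.le_induction generalizing K with
  | base => exact ⟨K, subset_rfl, hc, le_rfl⟩
  | succ c hlc ih =>
    obtain ⟨i, hiK, hmin⟩ := K.exists_min_image f (card_pos.mp (by omega))
    obtain ⟨L, hLK, hL, hsum⟩ := ih (K := K.erase i) (by rw [card_erase_of_mem hiK, hc]; rfl)
    refine ⟨L, hLK.trans (erase_subset i K), hL, ?_⟩
    have hfi : (c + 1 : ℕ) • f i ≤ ∑ j ∈ K, f j := hc ▸ card_nsmul_le_sum K f (f i) hmin
    rw [← add_sum_erase K f hiK] at hfi ⊢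
    rw [nsmul_eq_mul] at hfi
    push_cast at hfi hsum ⊢
    rcases Nat.eq_zero_or_pos l with rfl | hl
    · simp [card_eq_zero.mp hL]
    · have hc0 : (0 : 𝕜) < c := by exact_mod_cast hl.trans_le hlc
      refine le_of_mul_le_mul_left ?_ hc0
      linarith [mul_le_mul_of_nonneg_left hsum (by positivity : (0 : 𝕜) ≤ c + 1),
        mul_le_mul_of_nonneg_left hfi (Nat.cast_nonneg l : (0 : 𝕜) ≤ l)]

theorem exists_subset_card_le_mul_sum_le {ι 𝕜 : Type*} [CommRing 𝕜] [LinearOrder 𝕜]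
    [IsStrictOrderedRing 𝕜] {f : ι → 𝕜} (hf : ∀ i, 0 ≤ f i) {k l : ℕ} {K : Finset ι}
    (hK : #K ≤ k) (hlk : l ≤ k) :
    ∃ L ⊆ K, #L ≤ l ∧ l * ∑ i ∈ K, f i ≤ k * ∑ i ∈ L, f i := by
  have hsum (s : Finset ι) : 0 ≤ ∑ i ∈ s, f i := sum_nonneg fun i _ ↦ hf i
  rcases le_total l #K with hlK | hKl
  · obtain ⟨L, hLK, hL, hsumL⟩ := exists_subset_card_eq_mul_sum_le f hlK
    exact ⟨L, hLK, hL.le, hsumL.trans (mul_le_mul_of_nonneg_right (mod_cast hK) (hsum L))⟩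
  · exact ⟨K, subset_rfl, hKl, mul_le_mul_of_nonneg_right (mod_cast hlk) (hsum K)⟩

theorem sum_abs_div_sum_abs_le_one {ι : Type*} [Fintype ι] (g : ι → ℝ) (S : Finset ι) :
    (∑ i ∈ S, |g i|) / ∑ i, |g i| ≤ 1 :=
  div_le_one_of_le₀ (sum_le_univ_sum_of_nonneg fun _ ↦ abs_nonneg _)
    (sum_nonneg fun _ _ ↦ abs_nonneg _)

section

variable {m n : ℕ} (A : Matrix (Fin m) (Fin n) ℝ)

theorem bddAbove_alphaS_set (S : Finset (Fin n)) : BddAbove {r : ℝ | ∃ z : Fin n → ℝ,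
    A.mulVec z = 0 ∧ z ≠ 0 ∧ r = (∑ i ∈ S, |z i|) / (∑ i, |z i|)} :=
  ⟨1, by rintro r ⟨z, -, -, rfl⟩; exact sum_abs_div_sum_abs_le_one z S⟩

theorem le_alphaS {z : Fin n → ℝ} (hz : A.mulVec z = 0) (hz₀ : z ≠ 0) (S : Finset (Fin n)) :
    (∑ i ∈ S, |z i|) / (∑ i, |z i|) ≤ alphaS A S :=
  le_csSup (bddAbove_alphaS_set A S) ⟨z, hz, hz₀, rfl⟩

theorem alphaS_le_one (S : Finset (Fin n)) : alphaS A S ≤ 1 :=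
  Real.sSup_le (by rintro r ⟨z, -, -, rfl⟩; exact sum_abs_div_sum_abs_le_one z S) zero_le_one

theorem alphaS_le_alphaK {j : ℕ} {K : Finset (Fin n)} (hK : #K ≤ j) :
    alphaS A K ≤ alphaK A j :=
  le_csSup ⟨1, by rintro r ⟨K, -, rfl⟩; exact alphaS_le_one A K⟩ ⟨K, hK, rfl⟩

theorem alphaK_nonneg (j : ℕ) : 0 ≤ alphaK A j := by
  refine Real.sSup_nonneg ?_
  rintro r ⟨K, -, rfl⟩
  refine Real.sSup_nonneg ?_
  rintro r ⟨z, -, -, rfl⟩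
  positivity

theorem alphaK_le_of_forall_le {j : ℕ} {c : ℝ} (hc : 0 ≤ c)
    (h : ∀ K : Finset (Fin n), #K ≤ j → ∀ z : Fin n → ℝ, A.mulVec z = 0 → z ≠ 0 →
      (∑ i ∈ K, |z i|) / (∑ i, |z i|) ≤ c) :
    alphaK A j ≤ c := by
  refine Real.sSup_le ?_ hc
  rintro r ⟨K, hK, rfl⟩
  refine Real.sSup_le ?_ hc
  rintro r ⟨z, hz, hz₀, rfl⟩
  exact h K hK z hz hz₀

end

theorem stmt_3_general {m n k l : ℕ} (A : Matrix (Fin m) (Fin n) ℝ)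
    (hl : 1 ≤ l) (hlk : l ≤ k) :
    alphaK A k ≤ ((k : ℝ) / (l : ℝ)) * alphaK A l := by
  refine alphaK_le_of_forall_le A (by positivity [alphaK_nonneg A l]) fun K hK z hz hz₀ ↦ ?_
  obtain ⟨L, -, hL, hsum⟩ :=
    exists_subset_card_le_mul_sum_le (fun i ↦ abs_nonneg (z i)) hK hlk
  have hz₁ : 0 < ∑ i, |z i| := by
    obtain ⟨i, hi⟩ := Function.ne_iff.mp hz₀
    exact sum_pos' (fun j _ ↦ abs_nonneg _) ⟨i, mem_univ i, abs_pos.mpr hi⟩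
  calc (∑ i ∈ K, |z i|) / ∑ i, |z i|
      ≤ (k / l) * ((∑ i ∈ L, |z i|) / ∑ i, |z i|) := by
        rw [div_mul_div_comm, div_le_div_iff₀ hz₁ (by positivity)]
        linarith [mul_le_mul_of_nonneg_right hsum hz₁.le]
    _ ≤ (k / l) * alphaK A l := by
        gcongr
        exact (le_alphaS A hz hz₀ L).trans (alphaS_le_alphaK A hL)

theorem stmt_3 {m n k l : ℕ} (A : Matrix (Fin m) (Fin n) ℝ)
    (hN : ∃ z : Fin n → ℝ, A.mulVec z = 0 ∧ z ≠ 0)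
    (hl : 1 ≤ l) (hlk : l ≤ k) (hkn : k ≤ n) :
    alphaK A k ≤ ((k : ℝ) / (l : ℝ)) * alphaK A l :=
  stmt_3_general A hl hlk
end

section
/- Feasibility of the uniform coefficients in the optimized pick-l program: fix K* ⊆ {1,...,n} with |K*| = k and l with 1 ≤ l ≤ k. Define γ_L = 1/C(k−1,l−1) if L ⊆ K* with |L| = l, and γ_L = 0 otherwise. Then (i) γ_L ≥ 0 for all l-subsets L; (ii) ∑_L γ_L = k/l; (iii) for every integer b with 1 ≤ b ≤ l and every b-element set B, ∑_{L ⊇ B, |L| = l} γ_L ≤ C(k−b, l−b)/C(k−1, l−1). -/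
open Finset

/-!
The weights put the same mass `1 / C(k-1, l-1)` on each `l`-subset of `K*` and nothing elsewhere,
so every sum in question is this mass times a count of `l`-subsets of `K*`. There are
`C(k, l) = (k / l) C(k-1, l-1)` of them in total, and those containing a fixed `b`-set `B`
inject into the `(l-b)`-subsets of `K* \ B` by removing `B`.
-/

theorem Nat.cast_choose_div_choose_pred {K : Type*} [Field K] [CharZero K] {k l : ℕ}
    (hl : 1 ≤ l) (hlk : l ≤ k) :
    (k.choose l : K) / ((k - 1).choose (l - 1) : K) = k / l := by
  obtain ⟨k, rfl⟩ : ∃ k', k = k' + 1 := ⟨k - 1, by omega⟩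
  obtain ⟨l, rfl⟩ : ∃ l', l = l' + 1 := ⟨l - 1, by omega⟩
  have hpos : ((k.choose l : ℕ) : K) ≠ 0 := by
    exact_mod_cast (Nat.choose_pos (by omega)).ne'
  rw [Nat.add_sub_cancel, Nat.add_sub_cancel,
    div_eq_div_iff hpos (by exact_mod_cast l.succ_ne_zero)]
  exact_mod_cast (Nat.add_one_mul_choose_eq k l).symm

theorem Finset.card_powersetCard_filter_superset_le {α : Type*} [DecidableEq α]
    (s B : Finset α) (l : ℕ) :
    #{L ∈ s.powersetCard l | B ⊆ L} ≤ (#s - #B).choose (l - #B) := by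
  by_cases hBs : B ⊆ s
  · calc #{L ∈ s.powersetCard l | B ⊆ L}
        ≤ #((s \ B).powersetCard (l - #B)) := by
          refine card_le_card_of_injOn (· \ B) (fun L hL => ?_) (fun L₁ hL₁ L₂ hL₂ h => ?_)
          · obtain ⟨hLs, hBL⟩ := mem_filter.mp hL
            obtain ⟨hLs, hLl⟩ := mem_powersetCard.mp hLs
            exact mem_powersetCard.mpr
              ⟨sdiff_subset_sdiff hLs le_rfl, by rw [card_sdiff_of_subset hBL, hLl]⟩
          · have hB₁ := (mem_filter.mp hL₁).2
            have hB₂ := (mem_filter.mp hL₂).2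
            rw [← sdiff_union_of_subset hB₁, ← sdiff_union_of_subset hB₂]
            exact congrArg (· ∪ B) h
      _ = (#s - #B).choose (l - #B) := by rw [card_powersetCard, card_sdiff_of_subset hBs]
  · rw [filter_false_of_mem fun L hL hBL => hBs (hBL.trans (mem_powersetCard.mp hL).1)]
    exact Nat.zero_le _

theorem stmt_11_general {n k l : ℕ} (hl : 1 ≤ l) (hlk : l ≤ k)
    (Kstar : Finset (Fin n)) (hK : Kstar.card = k)
    (γ : Finset (Fin n) → ℝ)
    (hγ : ∀ L : Finset (Fin n),
      γ L = if L ⊆ Kstar ∧ L.card = l then 1 / ((k - 1).choose (l - 1) : ℝ) else 0) :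
    (∀ L : Finset (Fin n), 0 ≤ γ L) ∧
    (∑ L ∈ (Finset.univ : Finset (Fin n)).powersetCard l, γ L = (k : ℝ) / (l : ℝ)) ∧
    (∀ b : ℕ, ∀ B : Finset (Fin n), 1 ≤ b → b ≤ l → B.card = b →
      ∑ L ∈ ((Finset.univ : Finset (Fin n)).powersetCard l).filter (fun L => B ⊆ L), γ L ≤
        ((k - b).choose (l - b) : ℝ) / ((k - 1).choose (l - 1) : ℝ)) := by
  set c : ℝ := 1 / ((k - 1).choose (l - 1) : ℝ)
  have hγ_indicator : γ = fun L => if L ∈ Kstar.powersetCard l then c else 0 := by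
    funext L
    simp only [hγ, mem_powersetCard]
  have hc : 0 ≤ c := by positivity
  have hsum (S : Finset (Finset (Fin n))) :
      ∑ L ∈ S, γ L = #(S ∩ Kstar.powersetCard l) * c := by
    rw [hγ_indicator, sum_ite_mem, sum_const, nsmul_eq_mul]
  refine ⟨fun L => ?_, ?_, fun b B _ _ hB => ?_⟩
  · rw [hγ]
    exact ite_nonneg hc le_rfl
  · rw [hsum, inter_eq_right.mpr (powersetCard_mono (subset_univ Kstar)), card_powersetCard, hK,
      ← div_eq_mul_one_div, Nat.cast_choose_div_choose_pred hl hlk]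
  · have hcount :
        #({L ∈ (univ : Finset (Fin n)).powersetCard l | B ⊆ L} ∩ Kstar.powersetCard l) ≤
          (k - b).choose (l - b) := by
      calc _ ≤ #{L ∈ Kstar.powersetCard l | B ⊆ L} :=
            card_le_card fun L hL => by
              rw [mem_inter, mem_filter] at hL
              exact mem_filter.mpr ⟨hL.2, hL.1.2⟩
        _ ≤ _ := hK ▸ hB ▸ card_powersetCard_filter_superset_le Kstar B l
    rw [hsum, div_eq_mul_one_div]
    gcongr

theorem stmt_11 {n k l : ℕ} (hl : 1 ≤ l) (hlk : l ≤ k) (hkn : k ≤ n)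
    (Kstar : Finset (Fin n)) (hK : Kstar.card = k)
    (γ : Finset (Fin n) → ℝ)
    (hγ : ∀ L : Finset (Fin n),
      γ L = if L ⊆ Kstar ∧ L.card = l then 1 / ((k - 1).choose (l - 1) : ℝ) else 0) :
    (∀ L : Finset (Fin n), 0 ≤ γ L) ∧
    (∑ L ∈ (Finset.univ : Finset (Fin n)).powersetCard l, γ L = (k : ℝ) / (l : ℝ)) ∧
    (∀ b : ℕ, ∀ B : Finset (Fin n), 1 ≤ b → b ≤ l → B.card = b →
      ∑ L ∈ ((Finset.univ : Finset (Fin n)).powersetCard l).filter (fun L => B ⊆ L), γ L ≤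
        ((k - b).choose (l - b) : ℝ) / ((k - 1).choose (l - 1) : ℝ)) :=
  stmt_11_general hl hlk Kstar hK γ hγ
end

section
/- Dual characterization of the singleton proportion parameter: for each index i, min over y ∈ ℝ^m of ‖e_i − Aᵀ y‖_∞ equals max over x with Ax = 0 and ‖x‖_1 ≤ 1 of e_iᵀ x, and this common value equals α_{{i}} (the proportion parameter of the singleton {i}). -/
/-!
Both extremal values equal the norm of `e_i` in the quotient of `(ℝⁿ, ‖·‖_∞)` by `W = range Aᵀ`,
i.e. its sup-distance to `W`. The dual of `ℓ^∞` is `ℓ^1`, and the functionals vanishing on `W`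
are the vectors of `ker A`; Hahn–Banach on the quotient produces one of `ℓ^1`-norm at most `1`
attaining the quotient norm at `e_i`, while Hölder gives the reverse inequality. The feasible set
is symmetric under `x ↦ -x`, so maximizing `x i` or `|x i|` gives the same value.
-/

open Finset Matrix

variable {ι : Type*} [Fintype ι]

theorem Pi.iSup_abs_eq_norm (v : ι → ℝ) : ⨆ t, |v t| = ‖v‖ := by
  cases isEmpty_or_nonempty ι
  · simp [Subsingleton.elim v 0]
  · refine le_antisymm (ciSup_le fun t => norm_le_pi_norm v t) ?_
    have hbdd : BddAbove (Set.range fun t => |v t|) := (Set.finite_range _).bddAbove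
    refine (pi_norm_le_iff_of_nonneg ?_).2 fun t => le_ciSup hbdd t
    exact (abs_nonneg _).trans (le_ciSup hbdd (Classical.arbitrary ι))

theorem dotProduct_le_norm_of_sum_abs_le_one {c : ι → ℝ} (hc : ∑ t, |c t| ≤ 1) (v : ι → ℝ) :
    c ⬝ᵥ v ≤ ‖v‖ :=
  calc c ⬝ᵥ v ≤ ∑ t, |c t| * ‖v‖ :=
        sum_le_sum fun t _ => calc
          c t * v t ≤ |c t| * |v t| := (le_abs_self _).trans_eq (abs_mul _ _)
          _ ≤ |c t| * ‖v‖ := mul_le_mul_of_nonneg_left (norm_le_pi_norm v t) (abs_nonneg _)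
    _ = (∑ t, |c t|) * ‖v‖ := (sum_mul ..).symm
    _ ≤ ‖v‖ := mul_le_of_le_one_left (norm_nonneg v) hc

theorem sum_abs_le_one_of_dotProduct_le_norm {c : ι → ℝ} (hc : ∀ v, c ⬝ᵥ v ≤ ‖v‖) :
    ∑ t, |c t| ≤ 1 := by
  set s : ι → ℝ := fun t => SignType.sign (c t)
  have hs : ‖s‖ ≤ 1 := (pi_norm_le_iff_of_nonneg zero_le_one).2 fun t => by
    simp only [s, Real.norm_eq_abs]
    cases SignType.sign (c t) <;> simp
  calc ∑ t, |c t| = c ⬝ᵥ s := sum_congr rfl fun t _ => by rw [mul_comm, sign_mul_self]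
    _ ≤ 1 := (hc s).trans hs

section Quotient

variable (W : Submodule ℝ (ι → ℝ))

theorem isGLB_norm_sub_mem (e : ι → ℝ) :
    IsGLB {r | ∃ w ∈ W, r = ‖e - w‖} ‖(Submodule.Quotient.mk e : (ι → ℝ) ⧸ W)‖ := by
  refine ⟨?_, fun b hb => ?_⟩
  · rintro r ⟨w, hw, rfl⟩
    calc ‖(Submodule.Quotient.mk e : (ι → ℝ) ⧸ W)‖
        = ‖(Submodule.Quotient.mk (e - w) : (ι → ℝ) ⧸ W)‖ := by
          rw [Submodule.Quotient.mk_sub, (Submodule.Quotient.mk_eq_zero W).2 hw, sub_zero]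
      _ ≤ ‖e - w‖ := Submodule.Quotient.norm_mk_le W _
  · refine QuotientAddGroup.le_norm_iff.2 fun m hm => hb ⟨e - m, ?_, by rw [sub_sub_cancel]⟩
    exact (Submodule.Quotient.eq W).1 hm.symm

theorem dotProduct_le_norm_mk {c : ι → ℝ} (hcW : ∀ w ∈ W, c ⬝ᵥ w = 0) (hc : ∑ t, |c t| ≤ 1)
    (e : ι → ℝ) : c ⬝ᵥ e ≤ ‖(Submodule.Quotient.mk e : (ι → ℝ) ⧸ W)‖ := by
  refine (isGLB_norm_sub_mem W e).2 ?_
  rintro r ⟨w, hw, rfl⟩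
  calc c ⬝ᵥ e = c ⬝ᵥ (e - w) := by rw [dotProduct_sub, hcW w hw, sub_zero]
    _ ≤ ‖e - w‖ := dotProduct_le_norm_of_sum_abs_le_one hc _

theorem exists_dotProduct_eq_norm_mk (e : ι → ℝ) :
    ∃ c : ι → ℝ, (∀ w ∈ W, c ⬝ᵥ w = 0) ∧ ∑ t, |c t| ≤ 1 ∧
      c ⬝ᵥ e = ‖(Submodule.Quotient.mk e : (ι → ℝ) ⧸ W)‖ := by
  classical
  have : IsClosed (W : Set (ι → ℝ)) := W.closed_of_finiteDimensional
  obtain ⟨g, hg_norm, hg_e⟩ := exists_dual_vector'' ℝ (Submodule.Quotient.mk e : (ι → ℝ) ⧸ W)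
  set c := (dotProductEquiv ℝ ι).symm (g.toLinearMap ∘ₗ W.mkQ)
  have hc : ∀ v, c ⬝ᵥ v = g (Submodule.Quotient.mk v) := fun v =>
    LinearMap.congr_fun ((dotProductEquiv ℝ ι).apply_symm_apply _) v
  refine ⟨c, fun w hw => ?_, sum_abs_le_one_of_dotProduct_le_norm fun v => ?_,
    by rw [hc, hg_e]; rfl⟩
  · rw [hc, (Submodule.Quotient.mk_eq_zero W).2 hw, map_zero]
  · calc c ⬝ᵥ v ≤ ‖g (Submodule.Quotient.mk v)‖ := (hc v).trans_le (le_abs_self _)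
      _ ≤ ‖g‖ * ‖(Submodule.Quotient.mk v : (ι → ℝ) ⧸ W)‖ := g.le_opNorm _
      _ ≤ 1 * ‖v‖ :=
        mul_le_mul hg_norm (Submodule.Quotient.norm_mk_le W v) (norm_nonneg _) zero_le_one
      _ = ‖v‖ := one_mul _

theorem isGreatest_dotProduct_norm_mk (e : ι → ℝ) :
    IsGreatest {r | ∃ c : ι → ℝ, (∀ w ∈ W, c ⬝ᵥ w = 0) ∧ ∑ t, |c t| ≤ 1 ∧ r = c ⬝ᵥ e}
      ‖(Submodule.Quotient.mk e : (ι → ℝ) ⧸ W)‖ := by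
  obtain ⟨c, hcW, hc, hce⟩ := exists_dotProduct_eq_norm_mk W e
  refine ⟨⟨c, hcW, hc, hce.symm⟩, ?_⟩
  rintro r ⟨c, hcW, hc, rfl⟩
  exact dotProduct_le_norm_mk W hcW hc e

theorem isGreatest_abs_dotProduct_norm_mk (e : ι → ℝ) :
    IsGreatest {r | ∃ c : ι → ℝ, (∀ w ∈ W, c ⬝ᵥ w = 0) ∧ ∑ t, |c t| ≤ 1 ∧ r = |c ⬝ᵥ e|}
      ‖(Submodule.Quotient.mk e : (ι → ℝ) ⧸ W)‖ := by
  obtain ⟨c, hcW, hc, hce⟩ := exists_dotProduct_eq_norm_mk W e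
  refine ⟨⟨c, hcW, hc, by rw [hce, abs_norm]⟩, ?_⟩
  rintro r ⟨c, hcW, hc, rfl⟩
  have hnegW : ∀ w ∈ W, -c ⬝ᵥ w = 0 := fun w hw => by rw [neg_dotProduct, hcW w hw, neg_zero]
  have hneg : ∑ t, |(-c) t| ≤ 1 := by simpa only [Pi.neg_apply, abs_neg] using hc
  refine abs_le'.2 ⟨dotProduct_le_norm_mk W hcW hc e, ?_⟩
  simpa only [neg_dotProduct] using dotProduct_le_norm_mk W hnegW hneg e

end Quotient

theorem Matrix.forall_mem_range_transpose_dotProduct_eq_zero_iff {R κ : Type*} [CommSemiring R]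
    [Fintype κ] (A : Matrix κ ι R) (x : ι → R) :
    (∀ w ∈ LinearMap.range Aᵀ.mulVecLin, x ⬝ᵥ w = 0) ↔ A *ᵥ x = 0 := by
  have hx : ∀ y, x ⬝ᵥ Aᵀ *ᵥ y = A *ᵥ x ⬝ᵥ y := fun y => by
    rw [dotProduct_mulVec, vecMul_transpose]
  simp only [LinearMap.mem_range, mulVecLin_apply, forall_exists_index, forall_apply_eq_imp_iff,
    hx]
  exact dotProduct_eq_zero_iff

theorem stmt_15 {m n : ℕ} (A : Matrix (Fin m) (Fin n) ℝ) (i : Fin n) :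
    sInf {r : ℝ | ∃ y : Fin m → ℝ,
        r = ⨆ t : Fin n, |(if t = i then (1 : ℝ) else 0) - A.transpose.mulVec y t|} =
      sSup {r : ℝ | ∃ x : Fin n → ℝ, A.mulVec x = 0 ∧ (∑ j, |x j|) ≤ 1 ∧ r = x i} ∧
    sSup {r : ℝ | ∃ x : Fin n → ℝ, A.mulVec x = 0 ∧ (∑ j, |x j|) ≤ 1 ∧ r = x i} =
      sSup {r : ℝ | ∃ x : Fin n → ℝ, A.mulVec x = 0 ∧ (∑ j, |x j|) ≤ 1 ∧ r = |x i|} := by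
  set e : Fin n → ℝ := fun t => if t = i then 1 else 0
  set W := LinearMap.range Aᵀ.mulVecLin
  have he : ∀ x : Fin n → ℝ, x ⬝ᵥ e = x i := fun x => by simp [e, dotProduct]
  have hT : {r : ℝ | ∃ y : Fin m → ℝ, r = ⨆ t, |e t - (Aᵀ *ᵥ y) t|} =
      {r | ∃ w ∈ W, r = ‖e - w‖} := by
    ext r
    simp only [W, Set.mem_ofPred_eq, LinearMap.mem_range, mulVecLin_apply, exists_exists_eq_and]
    simp only [← Pi.sub_apply, Pi.iSup_abs_eq_norm]
  simp only [← he, ← A.forall_mem_range_transpose_dotProduct_eq_zero_iff]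
  rw [hT, (isGLB_norm_sub_mem W e).csInf_eq ⟨_, 0, W.zero_mem, rfl⟩,
    (isGreatest_dotProduct_norm_mk W e).csSup_eq, (isGreatest_abs_dotProduct_norm_mk W e).csSup_eq]
  exact ⟨rfl, rfl⟩
end

section
/- LP bound dominated by pick-1 bound: for any matrix Y ∈ ℝ^{m×n} with columns y_1,...,y_n, define α_k^{LP}(Y) = max_{1≤j≤n} ‖(I − YᵀA)e_j‖_{k,1} where ‖x‖_{k,1} is the sum of the k largest magnitudes of entries of x. Then inf_Y α_k^{LP}(Y) ≤ the pick-1 upper bound, i.e., inf_Y α_k^{LP}(Y) ≤ sum of the k largest values among {α_{{1}},...,α_{{n}}}, where α_{{i}} = min_{y∈ℝ^m} ‖e_i − Aᵀy‖_∞. -/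
/-!
Let `y_i` be a near-optimal certificate for `α_{i}`, i.e. `‖e_i - Aᵀ y_i‖_∞ ≤ α_{i} + ε`, and let
`Y` have columns `y_i`. The `(i, j)` entry of `I - YᵀA` is the `j`-th entry of `e_i - Aᵀ y_i`, so
every entry of row `i` is at most `α_{i} + ε` in absolute value. Hence the `k` largest entries of
any column of `I - YᵀA` sum to at most the sum of the `k` largest `α_{i}`, plus `k ε`.
-/

open Finset

section SumLargest

variable {ι : Type*}

/-- This is `sSup ∅ = 0` when `k` exceeds the number of indices. -/
noncomputable def sumLargest (k : ℕ) (f : ι → ℝ) : ℝ :=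
  sSup {r : ℝ | ∃ K : Finset ι, K.card = k ∧ r = ∑ i ∈ K, f i}

variable {k : ℕ} {f g : ι → ℝ}

theorem sumLargest_nonneg (hf : ∀ i, 0 ≤ f i) : 0 ≤ sumLargest k f :=
  Real.sSup_nonneg <| by
    rintro _ ⟨K, -, rfl⟩
    exact sum_nonneg fun i _ => hf i

theorem sum_le_sumLargest [Fintype ι] {K : Finset ι} (hK : K.card = k) :
    ∑ i ∈ K, f i ≤ sumLargest k f := by
  refine le_csSup ?_ ⟨K, hK, rfl⟩
  refine ((Set.finite_range fun K : Finset ι => ∑ i ∈ K, f i).subset ?_).bddAbove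
  rintro _ ⟨K, -, rfl⟩
  exact ⟨K, rfl⟩

theorem sumLargest_le_add [Fintype ι] {c : ℝ} (hc : 0 ≤ c) (h : ∀ i, f i ≤ g i + c) :
    sumLargest k f ≤ sumLargest k g + k * c := by
  by_cases hk : ∃ K : Finset ι, K.card = k
  · obtain ⟨K₀, hK₀⟩ := hk
    refine csSup_le ⟨_, K₀, hK₀, rfl⟩ ?_
    rintro _ ⟨K, hK, rfl⟩
    calc ∑ i ∈ K, f i ≤ ∑ i ∈ K, (g i + c) := sum_le_sum fun i _ => h i
      _ = ∑ i ∈ K, g i + k * c := by rw [sum_add_distrib, sum_const, hK, nsmul_eq_mul]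
      _ ≤ sumLargest k g + k * c := by grw [sum_le_sumLargest hK]
  · have hempty : ∀ f : ι → ℝ, sumLargest k f = 0 := fun f => by
      simp only [sumLargest, show ∀ r : ℝ, ¬∃ K : Finset ι, K.card = k ∧ r = ∑ i ∈ K, f i from
        fun r ⟨K, hK, _⟩ => hk ⟨K, hK⟩, Set.ofPred_false, Real.sSup_empty]
    rw [hempty, hempty, zero_add]
    positivity

end SumLargest

section LPBound

open Matrix

variable {κ ι : Type*} [Fintype κ] [DecidableEq ι] (k : ℕ) (A : Matrix κ ι ℝ)

/-- `α_{i}`: the `ℓ∞`-distance from `e_i` to the row space of `A`. -/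
noncomputable def rowSpaceDist (i : ι) : ℝ :=
  sInf {s : ℝ | ∃ y : κ → ℝ, s = ⨆ t, |(if t = i then (1 : ℝ) else 0) - Aᵀ.mulVec y t|}

/-- `α_k^{LP}(Y)`: the largest `(k, 1)`-norm of a column of `I - YᵀA`. -/
noncomputable def lpBound (Y : Matrix κ ι ℝ) : ℝ :=
  ⨆ j, sumLargest k fun i => |((1 : Matrix ι ι ℝ) - Yᵀ * A) i j|

theorem rowSpaceDist_nonneg (i : ι) : 0 ≤ rowSpaceDist A i :=
  Real.sInf_nonneg <| by
    rintro _ ⟨y, rfl⟩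
    exact Real.iSup_nonneg fun _ => abs_nonneg _

theorem lpBound_nonneg (Y : Matrix κ ι ℝ) : 0 ≤ lpBound k A Y :=
  Real.iSup_nonneg fun _ => sumLargest_nonneg fun _ => abs_nonneg _

theorem exists_abs_sub_mulVec_le [Fintype ι] (i : ι) {ε : ℝ} (hε : 0 < ε) :
    ∃ y : κ → ℝ, ∀ t, |(if t = i then (1 : ℝ) else 0) - Aᵀ.mulVec y t| ≤ rowSpaceDist A i + ε := by
  obtain ⟨_, ⟨y, rfl⟩, hy⟩ := Real.lt_sInf_add_pos (s := {s : ℝ | ∃ y : κ → ℝ,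
    s = ⨆ t, |(if t = i then (1 : ℝ) else 0) - Aᵀ.mulVec y t|}) ⟨_, 0, rfl⟩ hε
  exact ⟨y, fun t => (le_ciSup (Set.finite_range _).bddAbove t).trans hy.le⟩

theorem one_sub_transpose_mul_apply (y : ι → κ → ℝ) (i j : ι) :
    ((1 : Matrix ι ι ℝ) - (Matrix.of fun s i => y i s)ᵀ * A) i j =
      (if j = i then (1 : ℝ) else 0) - Aᵀ.mulVec (y i) j := by
  simp only [Matrix.sub_apply, Matrix.one_apply, Matrix.mul_apply, Matrix.transpose_apply,
    Matrix.of_apply, Matrix.mulVec, dotProduct, eq_comm, mul_comm]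

theorem exists_lpBound_le [Fintype ι] {ε : ℝ} (hε : 0 < ε) :
    ∃ Y : Matrix κ ι ℝ, lpBound k A Y ≤ sumLargest k (rowSpaceDist A) + ε := by
  -- `k + 1` rather than `k`, so that `k = 0` needs no separate case
  have hε' : 0 < ε / (k + 1) := by positivity
  choose y hy using fun i => exists_abs_sub_mulVec_le A i hε'
  refine ⟨Matrix.of fun s i => y i s, Real.iSup_le (fun j => ?_) ?_⟩
  · calc sumLargest k (fun i => |((1 : Matrix ι ι ℝ) - (Matrix.of fun s i => y i s)ᵀ * A) i j|)
        ≤ sumLargest k (rowSpaceDist A) + k * (ε / (k + 1)) :=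
          sumLargest_le_add hε'.le fun i => by rw [one_sub_transpose_mul_apply]; exact hy i j
      _ ≤ sumLargest k (rowSpaceDist A) + ε := by
          gcongr
          rw [mul_div_assoc', div_le_iff₀ (by positivity)]
          nlinarith
  · have := sumLargest_nonneg (k := k) (rowSpaceDist_nonneg A)
    positivity

end LPBound

theorem stmt_16_general {m n k : ℕ} (A : Matrix (Fin m) (Fin n) ℝ) :
    sInf {v : ℝ | ∃ Y : Matrix (Fin m) (Fin n) ℝ,
        v = ⨆ j : Fin n, sSup {r : ℝ | ∃ K : Finset (Fin n), K.card = k ∧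
          r = ∑ i ∈ K, |((1 : Matrix (Fin n) (Fin n) ℝ) - Matrix.transpose Y * A) i j|}} ≤
      sSup {r : ℝ | ∃ K : Finset (Fin n), K.card = k ∧
        r = ∑ i ∈ K, sInf {s : ℝ | ∃ y : Fin m → ℝ,
          s = ⨆ t : Fin n, |(if t = i then (1 : ℝ) else 0) - A.transpose.mulVec y t|}} := by
  change sInf {v | ∃ Y, v = lpBound k A Y} ≤ sumLargest k (rowSpaceDist A)
  refine le_of_forall_pos_le_add fun ε hε => ?_
  obtain ⟨Y, hY⟩ := exists_lpBound_le k A hε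
  have hbdd : BddBelow {v | ∃ Y, v = lpBound k A Y} := by
    refine ⟨0, ?_⟩
    rintro _ ⟨Y, rfl⟩
    exact lpBound_nonneg k A Y
  exact (csInf_le hbdd ⟨Y, rfl⟩).trans hY

theorem stmt_16 {m n k : ℕ} (A : Matrix (Fin m) (Fin n) ℝ) (hk : 1 ≤ k) (hkn : k ≤ n) :
    sInf {v : ℝ | ∃ Y : Matrix (Fin m) (Fin n) ℝ,
        v = ⨆ j : Fin n, sSup {r : ℝ | ∃ K : Finset (Fin n), K.card = k ∧
          r = ∑ i ∈ K, |((1 : Matrix (Fin n) (Fin n) ℝ) - Matrix.transpose Y * A) i j|}} ≤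
      sSup {r : ℝ | ∃ K : Finset (Fin n), K.card = k ∧
        r = ∑ i ∈ K, sInf {s : ℝ | ∃ y : Fin m → ℝ,
          s = ⨆ t : Fin n, |(if t = i then (1 : ℝ) else 0) - A.transpose.mulVec y t|}} :=
  stmt_16_general A
end
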